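/- (Lemma 1: correctness of hypertree-decomposition-based addition.) Let r be a Datalog rule with a complete hypertree decomposition whose nodes are enumerated p_1, …, p_m, and let Δ ⊆ I be datasets such that r[I \ Δ] ⊆ I. Put A_i = Π_{p_i}[I \ Δ] and N_i = Π_{p_i}[I, Δ] \ A_i, and define Δ_A = ⋃_{i=1}^{m} { h(r)τ | τ ∈ π_{var(h(r))}( (A_1∪N_1) ⋈ ⋯ ⋈ (A_{i-1}∪N_{i-1}) ⋈ N_i ⋈ A_{i+1} ⋈ ⋯ ⋈ A_m ) }. Then Δ_A \ I = r[I ∸ Δ] \ I; that is, the incremental cross-node evaluation computes exactly the new facts r[I ∸ Δ] \ I. -/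
import Mathlib


namespace Datalog

/-- An atom `P(t₁,…,tₖ)`: a predicate symbol applied to a list of terms, where
`Sum.inl v` denotes the variable `v` and `Sum.inr c` denotes the constant `c`. -/
structure Atom where
  pred : ℕ
  args : List (ℕ ⊕ ℕ)
deriving DecidableEq

/-- A fact: a variable-free atom, i.e. a predicate applied to constants only. -/
structure Fact where
  pred : ℕ
  args : List ℕ
deriving DecidableEq

/-- Applying a substitution `σ` (a map from variables to constants) to an atom. -/
def Atom.subst (A : Atom) (σ : ℕ → ℕ) : Fact :=
  ⟨A.pred, A.args.map (Sum.elim σ id)⟩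

/-- The set of variables occurring in an atom. -/
def Atom.vars (A : Atom) : Set ℕ := { v | Sum.inl v ∈ A.args }

/-- A Datalog rule: a head atom and a finite set of body atoms, which is safe:
every variable of the head occurs in some body atom. -/
structure Rule where
  head : Atom
  body : Finset Atom
  safe : ∀ v ∈ head.vars, ∃ B ∈ body, v ∈ B.vars

/-- `r[I] = { h(rσ) | b(rσ) ⊆ I }`. -/
def Rule.eval (r : Rule) (I : Set Fact) : Set Fact :=
  { f | ∃ σ : ℕ → ℕ, (∀ B ∈ r.body, B.subst σ ∈ I) ∧ f = r.head.subst σ }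

/-- `r[I ∸ Δ] = { h(rσ) | b(rσ) ⊆ I and b(rσ) ∩ Δ ≠ ∅ }`. -/
def Rule.evalDelta (r : Rule) (I Δ : Set Fact) : Set Fact :=
  { f | ∃ σ : ℕ → ℕ, (∀ B ∈ r.body, B.subst σ ∈ I) ∧
        (∃ B ∈ r.body, B.subst σ ∈ Δ) ∧ f = r.head.subst σ }

/-- `Π[I] = ⋃_{r ∈ Π} r[I]`. -/
def progEval (P : Set Rule) (I : Set Fact) : Set Fact := ⋃ r ∈ P, r.eval I

/-- `Π[I ∸ Δ] = ⋃_{r ∈ Π} r[I ∸ Δ]`. -/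
def progEvalDelta (P : Set Rule) (I Δ : Set Fact) : Set Fact := ⋃ r ∈ P, r.evalDelta I Δ

/-- `I_0 = E`, `I_{i+1} = I_i ∪ Π[I_i]`. -/
def matSeq (P : Set Rule) (E : Set Fact) : ℕ → Set Fact
  | 0 => E
  | n + 1 => matSeq P E n ∪ progEval P (matSeq P E n)

/-- The materialisation `mat(Π, E) = ⋃_{i ≥ 0} I_i`. -/
def mat (P : Set Rule) (E : Set Fact) : Set Fact := ⋃ n, matSeq P E n

/-- A tuple over a set of variables `V`: an assignment of a constant to each variable of `V`. -/
def Tuple (V : Set ℕ) : Type := V → ℕ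

/-- The restriction `σ|_V` of a substitution `σ` to the variables `V`. -/
def restrictT (V : Set ℕ) (σ : ℕ → ℕ) : Tuple V := fun v => σ v.1

/-- Extension of a tuple to a total substitution (an arbitrary default value
outside of its domain; all uses below only depend on values inside the domain). -/
noncomputable def extendT {V : Set ℕ} (t : Tuple V) : ℕ → ℕ := fun v =>
  letI := Classical.propDecidable (v ∈ V)
  if h : v ∈ V then t ⟨v, h⟩ else 0

/-- Two tuples agree on every variable on which both are defined. -/
def agreeOn {Vp Vq : Set ℕ} (t : Tuple Vp) (s : Tuple Vq) : Prop :=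
  ∀ v (h1 : v ∈ Vp) (h2 : v ∈ Vq), t ⟨v, h1⟩ = s ⟨v, h2⟩

/-- The natural join `⋈_p R_p` of a family of relations `R p` of tuples over `χ p`:
the set of tuples over `⋃ p, χ p` whose restriction to each `χ p` lies in `R p`. -/
def natJoin {ι : Type} (χ : ι → Set ℕ) (R : ∀ p, Set (Tuple (χ p))) :
    Set (Tuple (⋃ p, χ p)) :=
  { t | ∀ p, restrictT (χ p) (extendT t) ∈ R p }

/-- The projection `π_O` of a relation: restriction of each tuple to the variables `O`. -/
noncomputable def projT {V : Set ℕ} (O : Set ℕ) (Rel : Set (Tuple V)) : Set (Tuple O) :=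
  (fun t : Tuple V => restrictT O (extendT t)) '' Rel

/-- The semijoin `R_p ⋉ R_q`: tuples of `R_p` for which some tuple of `R_q`
agrees with them on the common variables. -/
def semijoin {Vp Vq : Set ℕ} (Rp : Set (Tuple Vp)) (Rq : Set (Tuple Vq)) : Set (Tuple Vp) :=
  { t ∈ Rp | ∃ s ∈ Rq, agreeOn t s }

/-- A rooted tree on the node type `ι`, given by a parent function under which
every node reaches the root. -/
structure RootedTree (ι : Type) where
  root : ι
  parent : ι → ι
  parent_root : parent root = root
  reaches_root : ∀ p, ∃ n, parent^[n] p = root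

namespace RootedTree

variable {ι : Type}

/-- `p` and `q` are joined by an edge of the tree. -/
def Adj (T : RootedTree ι) (p q : ι) : Prop :=
  p ≠ q ∧ (T.parent p = q ∨ T.parent q = p)

/-- `c` is a child of `p`. -/
def childOf (T : RootedTree ι) (c p : ι) : Prop :=
  T.parent c = p ∧ c ≠ T.root

/-- The set of nodes of the subtree `T_p` rooted at `p`. -/
def descendants (T : RootedTree ι) (p : ι) : Set ι :=
  { q | ∃ n, T.parent^[n] q = p }

/-- The set of nodes `S` induces a connected subtree of `T`: it has a topmost
node reachable from every node of `S` along a parent path staying inside `S`. -/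
def ConnSubtree (T : RootedTree ι) (S : Set ι) : Prop :=
  ∃ top ∈ S, ∀ p ∈ S, ∃ n, T.parent^[n] p = top ∧ ∀ m ≤ n, T.parent^[m] p ∈ S

end RootedTree

/-- The set of variables occurring in a finite set of atoms. -/
def atomsVars (s : Finset Atom) : Set ℕ := ⋃ B ∈ s, Atom.vars B

/-- The set of variables occurring in a rule. -/
def Rule.vars (r : Rule) : Set ℕ := Atom.vars r.head ∪ atomsVars r.body

/-- The in-node instantiations `Π_p[I] = { σ|_{χ(p)} | λ(p)σ ⊆ I }`. -/
def nodeEval (χp : Set ℕ) (lamp : Finset Atom) (I : Set Fact) : Set (Tuple χp) :=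
  { t | ∃ σ : ℕ → ℕ, (∀ B ∈ lamp, B.subst σ ∈ I) ∧ t = restrictT χp σ }

/-- `Π_p[I, Δ] = { σ|_{χ(p)} | λ(p)σ ⊆ I and λ(p)σ ∩ Δ ≠ ∅ }`. -/
def nodeEvalDelta (χp : Set ℕ) (lamp : Finset Atom) (I Δ : Set Fact) : Set (Tuple χp) :=
  { t | ∃ σ : ℕ → ℕ, (∀ B ∈ lamp, B.subst σ ∈ I) ∧
        (∃ B ∈ lamp, B.subst σ ∈ Δ) ∧ t = restrictT χp σ }

/-- A hypertree decomposition `⟨T, χ, λ⟩` of the rule `r`, with node type `ι`,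
satisfying conditions (1)–(4). -/
structure HTD (r : Rule) (ι : Type) [Fintype ι] where
  T : RootedTree ι
  χ : ι → Set ℕ
  lam : ι → Finset Atom
  lam_sub : ∀ p, lam p ⊆ r.body
  cond1 : ∀ B ∈ r.body, ∃ p, Atom.vars B ⊆ χ p
  cond2 : ∀ v ∈ r.vars, T.ConnSubtree { p | v ∈ χ p }
  cond3 : ∀ p, χ p ⊆ atomsVars (lam p)
  cond4 : ∀ p, atomsVars (lam p) ∩ (⋃ q ∈ T.descendants p, χ q) ⊆ χ p

/-- The decomposition is complete: every body atom `B` belongs to `λ(p)` for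
some node `p` with `var(B) ⊆ χ(p)`. -/
def HTD.Complete {r : Rule} {ι : Type} [Fintype ι] (H : HTD r ι) : Prop :=
  ∀ B ∈ r.body, ∃ p, B ∈ H.lam p ∧ Atom.vars B ⊆ H.χ p

/-- The set `Δ_A` computed by incremental cross-node evaluation for addition:
the union over pivots `i` of the head facts of
`(A_1 ∪ N_1) ⋈ ⋯ ⋈ (A_{i-1} ∪ N_{i-1}) ⋈ N_i ⋈ A_{i+1} ⋈ ⋯ ⋈ A_m`
projected to the head variables, where `A_j = Π_{p_j}[I \ Δ]` and
`N_j = Π_{p_j}[I, Δ] \ A_j`. -/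
noncomputable def deltaA (r : Rule) {m : ℕ} (H : HTD r (Fin m)) (I Δ : Set Fact) : Set Fact :=
  ⋃ i : Fin m,
    { f | ∃ τ ∈ projT (Atom.vars r.head)
            (natJoin H.χ (fun j =>
              if j < i then
                nodeEval (H.χ j) (H.lam j) (I \ Δ) ∪
                  (nodeEvalDelta (H.χ j) (H.lam j) I Δ \ nodeEval (H.χ j) (H.lam j) (I \ Δ))
              else if j = i then
                nodeEvalDelta (H.χ j) (H.lam j) I Δ \ nodeEval (H.χ j) (H.lam j) (I \ Δ)
              else
                nodeEval (H.χ j) (H.lam j) (I \ Δ))),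
          f = r.head.subst (extendT τ) }

lemma extendT_pos {V : Set ℕ} (t : Tuple V) {v : ℕ} (h : v ∈ V) :
    extendT t v = t ⟨v, h⟩ := by
  unfold extendT
  exact dif_pos h

lemma Atom.subst_congr (A : Atom) {σ σ' : ℕ → ℕ}
    (h : ∀ v ∈ A.vars, σ v = σ' v) : A.subst σ = A.subst σ' := by
  unfold Atom.subst
  congr 1
  apply List.map_congr_left
  intro x hx
  cases x with
  | inl v => exact h v hx
  | inr c => rfl

lemma nodeEval_mono {χp : Set ℕ} {lamp : Finset Atom} {I I' : Set Fact}
    (h : I ⊆ I') : nodeEval χp lamp I ⊆ nodeEval χp lamp I' := by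
  rintro t ⟨σ, hσ, rfl⟩
  exact ⟨σ, fun B hB => h (hσ B hB), rfl⟩

lemma nodeEvalDelta_sub {χp : Set ℕ} {lamp : Finset Atom} {I Δ : Set Fact} :
    nodeEvalDelta χp lamp I Δ ⊆ nodeEval χp lamp I := by
  rintro t ⟨σ, hσ, _, rfl⟩
  exact ⟨σ, hσ, rfl⟩

/-- If, for every node, the restriction of `σ` lies in the node relation over `J`,
then every body atom instantiated by `σ` lies in `J`. -/
lemma body_of_nodes {r : Rule} {ι : Type} [Fintype ι] (H : HTD r ι)
    (hc : H.Complete) (J : Set Fact) (σ : ℕ → ℕ)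
    (h : ∀ p, restrictT (H.χ p) σ ∈ nodeEval (H.χ p) (H.lam p) J) :
    ∀ B ∈ r.body, B.subst σ ∈ J := by
  intro B hB
  obtain ⟨p, hBlam, hBχ⟩ := hc B hB
  obtain ⟨σp, hσp, heq⟩ := h p
  have : B.subst σ = B.subst σp := by
    apply Atom.subst_congr
    intro v hv
    exact congrFun heq ⟨v, hBχ hv⟩
  rw [this]
  exact hσp B hBlam

/-- Lemma 1: correctness of hypertree-decomposition-based
addition: under the seminaïve invariant `r[I \ Δ] ⊆ I`, the incremental
cross-node evaluation computes exactly the new facts: `Δ_A \ I = r[I ∸ Δ] \ I`. -/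
theorem hd_addition_correct (r : Rule) (m : ℕ) (H : HTD r (Fin m))
    (hc : H.Complete) (I Δ : Set Fact) (hΔ : Δ ⊆ I)
    (hinv : r.eval (I \ Δ) ⊆ I) :
    deltaA r H I Δ \ I = r.evalDelta I Δ \ I := by
  classical
  -- head variables are covered by the node variables
  have hhead : Atom.vars r.head ⊆ ⋃ j, H.χ j := by
    intro v hv
    obtain ⟨B, hB, hvB⟩ := r.safe v hv
    obtain ⟨p, _, hBχ⟩ := hc B hB
    exact Set.mem_iUnion.2 ⟨p, hBχ hvB⟩
  ext f
  constructor
  · -- Δ_A \ I ⊆ r[I ∸ Δ] \ I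
    rintro ⟨hf, hfI⟩
    obtain ⟨i, τ, ⟨t, ht, rfl⟩, hfe⟩ := by
      simpa only [deltaA, Set.mem_iUnion, Set.mem_setOf_eq, projT,
        Set.mem_image] using hf
    set σ := extendT t with hσdef
    -- every node relation lies in Π_p[I]
    have hnodes : ∀ p, restrictT (H.χ p) σ ∈ nodeEval (H.χ p) (H.lam p) I := by
      intro p
      have hp := ht p
      by_cases h1 : p < i
      · simp only [if_pos h1] at hp
        rcases hp with hp | hp
        · exact nodeEval_mono Set.diff_subset hp
        · exact nodeEvalDelta_sub hp.1
      · simp only [if_neg h1] at hp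
        by_cases h2 : p = i
        · simp only [if_pos h2] at hp
          exact nodeEvalDelta_sub hp.1
        · simp only [if_neg h2] at hp
          exact nodeEval_mono Set.diff_subset hp
    have hbody : ∀ B ∈ r.body, B.subst σ ∈ I := body_of_nodes H hc I σ hnodes
    -- f = head σ
    have hfeq : f = r.head.subst σ := by
      rw [hfe]
      apply Atom.subst_congr
      intro v hv
      rw [extendT_pos _ hv]
      show restrictT (Atom.vars r.head) (extendT t) ⟨v, hv⟩ = σ v
      rfl
    by_cases hex : ∃ B ∈ r.body, B.subst σ ∈ Δ
    · exact ⟨⟨σ, hbody, hex, hfeq⟩, hfI⟩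
    · exfalso
      push_neg at hex
      apply hfI
      apply hinv
      exact ⟨σ, fun B hB => ⟨hbody B hB, hex B hB⟩, hfeq⟩
  · -- r[I ∸ Δ] \ I ⊆ Δ_A \ I
    rintro ⟨⟨σ, hbody, ⟨B₀, hB₀, hB₀Δ⟩, hfe⟩, hfI⟩
    refine ⟨?_, hfI⟩
    -- not all nodes can be in A_j, else f ∈ I
    have hnotall : ¬ ∀ j, restrictT (H.χ j) σ ∈ nodeEval (H.χ j) (H.lam j) (I \ Δ) := by
      intro hall
      apply hfI
      apply hinv
      exact ⟨σ, body_of_nodes H hc (I \ Δ) σ hall, hfe⟩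
    push_neg at hnotall
    -- take the greatest such node as pivot
    set S : Finset (Fin m) :=
      Finset.univ.filter (fun j => restrictT (H.χ j) σ ∉ nodeEval (H.χ j) (H.lam j) (I \ Δ))
      with hSdef
    have hSne : S.Nonempty := by
      obtain ⟨j, hj⟩ := hnotall
      exact ⟨j, by simp [hSdef, hj]⟩
    set i := S.max' hSne with hidef
    have hiS : i ∈ S := S.max'_mem hSne
    have hiA : restrictT (H.χ i) σ ∉ nodeEval (H.χ i) (H.lam i) (I \ Δ) := by
      simpa [hSdef] using hiS
    -- each node restriction is in Π_p[I] with witness σ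
    have hInode : ∀ j : Fin m, restrictT (H.χ j) σ ∈ nodeEval (H.χ j) (H.lam j) I :=
      fun j => ⟨σ, fun B hB => hbody B (H.lam_sub j hB), rfl⟩
    -- if a node restriction is not in A_j then it is in N_j
    have hN : ∀ j : Fin m, restrictT (H.χ j) σ ∉ nodeEval (H.χ j) (H.lam j) (I \ Δ) →
        restrictT (H.χ j) σ ∈
          nodeEvalDelta (H.χ j) (H.lam j) I Δ \ nodeEval (H.χ j) (H.lam j) (I \ Δ) := by
      intro j hj
      refine ⟨⟨σ, fun B hB => hbody B (H.lam_sub j hB), ?_, rfl⟩, hj⟩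
      by_contra hno
      push_neg at hno
      exact hj ⟨σ, fun B hB => ⟨hbody B (H.lam_sub j hB), hno B hB⟩, rfl⟩
    -- the join tuple
    set t : Tuple (⋃ j, H.χ j) := restrictT (⋃ j, H.χ j) σ with htdef
    have hrestr : ∀ j : Fin m, restrictT (H.χ j) (extendT t) = restrictT (H.χ j) σ := by
      intro j
      funext v
      show extendT t v.1 = σ v.1
      have hvU : v.1 ∈ ⋃ j, H.χ j := Set.mem_iUnion.2 ⟨j, v.2⟩
      rw [extendT_pos _ hvU]
      rfl
    -- membership in the join with pivot i
    have htjoin : t ∈ natJoin H.χ (fun j =>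
        if j < i then
          nodeEval (H.χ j) (H.lam j) (I \ Δ) ∪
            (nodeEvalDelta (H.χ j) (H.lam j) I Δ \ nodeEval (H.χ j) (H.lam j) (I \ Δ))
        else if j = i then
          nodeEvalDelta (H.χ j) (H.lam j) I Δ \ nodeEval (H.χ j) (H.lam j) (I \ Δ)
        else
          nodeEval (H.χ j) (H.lam j) (I \ Δ)) := by
      intro j
      rw [hrestr j]
      by_cases h1 : j < i
      · simp only [if_pos h1]
        by_cases hjA : restrictT (H.χ j) σ ∈ nodeEval (H.χ j) (H.lam j) (I \ Δ)
        · exact Or.inl hjA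
        · exact Or.inr (hN j hjA)
      · simp only [if_neg h1]
        by_cases h2 : j = i
        · simp only [if_pos h2]
          subst h2
          exact hN i hiA
        · simp only [if_neg h2]
          by_contra hjA
          have hjS : j ∈ S := by simp [hSdef, hjA]
          have := S.le_max' j hjS
          exact h1 (lt_of_le_of_ne this h2)
    refine Set.mem_iUnion.2 ⟨i, ?_⟩
    refine ⟨restrictT (Atom.vars r.head) (extendT t), ⟨t, htjoin, rfl⟩, ?_⟩
    rw [hfe]
    apply Atom.subst_congr
    intro v hv
    rw [extendT_pos (restrictT (Atom.vars r.head) (extendT t)) hv]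
    show σ v = extendT t v
    rw [extendT_pos t (hhead hv)]
    rfl

end Datalog
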